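/- Let g : [1,∞) → (0,∞) be an increasing function satisfying the doubling condition g(2x) ≤ D·g(x) for all x ≥ 1. Then for every integer m ≥ 0 there exists a constant C, depending only on m and D, such that for all r ∈ (0,1): ∑_{k=1}^∞ r^k · C(k+m, k) · g(k) ≤ C · g(1/(1−r)) · (1−r)^{−m−1}, where C(k+m,k) denotes the binomial coefficient (k+m choose k). -/

import Mathlib

/-!
Put `s = 1 / (1 - r)` and choose `L` with `max 1 D ≤ 2 ^ L`. Iterating the doubling condition
gives polynomial growth, `g y ≤ K (y / x) ^ L g x` for `1 ≤ x ≤ y`, hence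
`g n ≤ K (1 + (n (1 - r)) ^ L) g s` for all `n ≥ 1`. The factor `n ^ L` is absorbed by raising
the order of the binomial weight, `n ^ L C(n + m, m) ≤ (m + L)! / m! · C(n + m + L, m + L)`, and
since `∑ C(n + k, k) r ^ n = (1 - r) ^ (-k - 1)`, the `L` extra powers of `(1 - r)⁻¹` this costs
are exactly cancelled by the factor `(1 - r) ^ L`.
-/

open Set
open scoped Nat

theorem Nat.pow_mul_add_choose_mul_factorial_le (n m L : ℕ) :
    n ^ L * (n + m).choose m * m ! ≤ (n + (m + L)).choose (m + L) * (m + L)! := by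
  refine Nat.le_of_mul_le_mul_right ?_ n.factorial_pos
  calc n ^ L * (n + m).choose m * m ! * n ! = n ^ L * (n + m)! := by
        rw [← add_choose_mul_factorial_mul_factorial n m]; ring
    _ ≤ (n + m)! * (n + m + 1) ^ L := by rw [mul_comm]; gcongr; omega
    _ ≤ (n + m + L)! := factorial_mul_pow_le_factorial
    _ = (n + (m + L)).choose (m + L) * (m + L)! * n ! := by
        rw [mul_assoc, mul_comm (m + L)!, ← mul_assoc, add_choose_mul_factorial_mul_factorial,
          add_assoc]

section Geometric

variable {r : ℝ} (m L : ℕ)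

theorem pow_mul_choose_mul_geometric_le (hr : 0 ≤ r) (n : ℕ) :
    (n : ℝ) ^ L * ((n + m).choose m * r ^ n) ≤
      ((m + L)! / m ! : ℝ) * ((n + (m + L)).choose (m + L) * r ^ n) := by
  rw [div_mul_eq_mul_div, le_div_iff₀ (by positivity)]
  have := Nat.pow_mul_add_choose_mul_factorial_le n m L
  calc (n : ℝ) ^ L * ((n + m).choose m * r ^ n) * m !
      = ((n ^ L * (n + m).choose m * m ! : ℕ) : ℝ) * r ^ n := by push_cast; ring
    _ ≤ (((n + (m + L)).choose (m + L) * (m + L)! : ℕ) : ℝ) * r ^ n := by gcongr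
    _ = _ := by push_cast; ring

theorem summable_pow_mul_choose_mul_geometric (hr0 : 0 ≤ r) (hr1 : r < 1) :
    Summable fun n : ℕ ↦ (n : ℝ) ^ L * ((n + m).choose m * r ^ n) := by
  have hr : ‖r‖ < 1 := by rwa [Real.norm_of_nonneg hr0]
  refine .of_nonneg_of_le (fun n ↦ by positivity) (pow_mul_choose_mul_geometric_le m L hr0) ?_
  exact (summable_choose_mul_geometric_of_norm_lt_one (m + L) hr).mul_left _

theorem tsum_pow_mul_choose_mul_geometric_le (hr0 : 0 ≤ r) (hr1 : r < 1) :
    ∑' n : ℕ, (n : ℝ) ^ L * ((n + m).choose m * r ^ n) ≤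
      (m + L)! / m ! / (1 - r) ^ (m + L + 1) := by
  have hr : ‖r‖ < 1 := by rwa [Real.norm_of_nonneg hr0]
  calc _ ≤ ∑' n : ℕ, ((m + L)! / m ! : ℝ) * ((n + (m + L)).choose (m + L) * r ^ n) :=
        (summable_pow_mul_choose_mul_geometric m L hr0 hr1).tsum_le_tsum
          (pow_mul_choose_mul_geometric_le m L hr0)
          ((summable_choose_mul_geometric_of_norm_lt_one (m + L) hr).mul_left _)
    _ = _ := by rw [tsum_mul_left, tsum_choose_mul_geometric_of_norm_lt_one _ hr]; ring

theorem choose_mul_geometric_mul_one_add_pow_eq (n : ℕ) :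
    (n + m).choose m * r ^ n * (1 + (n * (1 - r)) ^ L) =
      (n + m).choose m * r ^ n + (1 - r) ^ L * ((n : ℝ) ^ L * ((n + m).choose m * r ^ n)) := by
  rw [mul_pow]; ring

theorem summable_choose_mul_geometric_mul_one_add_pow (hr0 : 0 ≤ r) (hr1 : r < 1) :
    Summable fun n : ℕ ↦ (n + m).choose m * r ^ n * (1 + (n * (1 - r)) ^ L) := by
  have hr : ‖r‖ < 1 := by rwa [Real.norm_of_nonneg hr0]
  simp_rw [choose_mul_geometric_mul_one_add_pow_eq]
  exact (summable_choose_mul_geometric_of_norm_lt_one m hr).add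
    ((summable_pow_mul_choose_mul_geometric m L hr0 hr1).mul_left _)

theorem tsum_choose_mul_geometric_mul_one_add_pow_le (hr0 : 0 ≤ r) (hr1 : r < 1) :
    ∑' n : ℕ, (n + m).choose m * r ^ n * (1 + (n * (1 - r)) ^ L) ≤
      (1 + (m + L)! / m !) / (1 - r) ^ (m + 1) := by
  have hr : ‖r‖ < 1 := by rwa [Real.norm_of_nonneg hr0]
  have h1r : 0 < 1 - r := by linarith
  simp_rw [choose_mul_geometric_mul_one_add_pow_eq]
  rw [(summable_choose_mul_geometric_of_norm_lt_one m hr).tsum_add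
      ((summable_pow_mul_choose_mul_geometric m L hr0 hr1).mul_left _),
    tsum_mul_left, tsum_choose_mul_geometric_of_norm_lt_one m hr]
  calc _ ≤ 1 / (1 - r) ^ (m + 1) + (1 - r) ^ L * ((m + L)! / m ! / (1 - r) ^ (m + L + 1)) := by
        gcongr; exact tsum_pow_mul_choose_mul_geometric_le m L hr0 hr1
    _ = _ := by field_simp; ring

end Geometric

section Doubling

variable {g : ℝ → ℝ} {K : ℝ} {L : ℕ}

theorem two_pow_mul_le_pow_mul_of_doubling (hK : 0 ≤ K)
    (hdouble : ∀ x, 1 ≤ x → g (2 * x) ≤ K * g x) (j : ℕ) {x : ℝ} (hx : 1 ≤ x) :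
    g (2 ^ j * x) ≤ K ^ j * g x := by
  induction j with
  | zero => simp
  | succ j ih =>
    have h1 : 1 ≤ 2 ^ j * x := one_le_mul_of_one_le_of_one_le (one_le_pow₀ one_le_two) hx
    calc g (2 ^ (j + 1) * x) = g (2 * (2 ^ j * x)) := by ring_nf
      _ ≤ K * g (2 ^ j * x) := hdouble _ h1
      _ ≤ K * (K ^ j * g x) := by gcongr
      _ = K ^ (j + 1) * g x := by ring

theorem le_mul_div_pow_of_doubling (hmono : MonotoneOn g (Ici 1)) (hg0 : ∀ x, 1 ≤ x → 0 ≤ g x)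
    (hK : 0 ≤ K) (hKL : K ≤ 2 ^ L) (hdouble : ∀ x, 1 ≤ x → g (2 * x) ≤ K * g x) {x y : ℝ}
    (hx : 1 ≤ x) (hxy : x ≤ y) : g y ≤ K * (y / x) ^ L * g x := by
  have hx0 : 0 < x := by linarith
  obtain ⟨j, hj, hjy⟩ := exists_nat_pow_near ((one_le_div hx0).2 hxy) one_lt_two
  have hy : y ≤ 2 ^ (j + 1) * x := ((div_lt_iff₀ hx0).1 hjy).le
  have := hg0 x hx
  calc g y ≤ g (2 ^ (j + 1) * x) := hmono (hx.trans hxy) (hx.trans (hxy.trans hy)) hy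
    _ ≤ K ^ (j + 1) * g x := two_pow_mul_le_pow_mul_of_doubling hK hdouble _ hx
    _ = K * K ^ j * g x := by ring
    _ ≤ K * (2 ^ L) ^ j * g x := by gcongr
    _ = K * (2 ^ j) ^ L * g x := by rw [← pow_mul, ← pow_mul, mul_comm L j]
    _ ≤ K * (y / x) ^ L * g x := by gcongr

theorem le_mul_one_add_div_pow_of_doubling (hmono : MonotoneOn g (Ici 1))
    (hg0 : ∀ x, 1 ≤ x → 0 ≤ g x) (hK : 1 ≤ K) (hKL : K ≤ 2 ^ L)
    (hdouble : ∀ x, 1 ≤ x → g (2 * x) ≤ K * g x) {x y : ℝ} (hx : 1 ≤ x) (hy : 1 ≤ y) :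
    g y ≤ K * (1 + (y / x) ^ L) * g x := by
  have hyx : 0 ≤ (y / x) ^ L := pow_nonneg (div_nonneg (by linarith) (by linarith)) L
  have := hg0 x hx
  rcases le_total y x with hyx | hxy
  · calc g y ≤ g x := hmono hy hx hyx
      _ ≤ K * (1 + (y / x) ^ L) * g x :=
        le_mul_of_one_le_left this (one_le_mul_of_one_le_of_one_le hK (by linarith))
  · calc g y ≤ K * (y / x) ^ L * g x :=
          le_mul_div_pow_of_doubling hmono hg0 (by linarith) hKL hdouble hx hxy
      _ ≤ K * (1 + (y / x) ^ L) * g x := by gcongr; linarith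

theorem tsum_geometric_mul_choose_mul_le_of_doubling (m : ℕ) (hmono : MonotoneOn g (Ici 1))
    (hg0 : ∀ x, 1 ≤ x → 0 < g x) (hK : 1 ≤ K) (hKL : K ≤ 2 ^ L)
    (hdouble : ∀ x, 1 ≤ x → g (2 * x) ≤ K * g x) {r : ℝ} (hr0 : 0 < r) (hr1 : r < 1) :
    ∑' k : ℕ, r ^ (k + 1) * ((k + 1 + m).choose (k + 1) : ℝ) * g ((k + 1 : ℕ) : ℝ) ≤
      K * g (1 / (1 - r)) * ((1 + (m + L)! / m !) / (1 - r) ^ (m + 1)) := by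
  have h1r : 0 < 1 - r := by linarith
  set s := 1 / (1 - r)
  have hs : 1 ≤ s := by rw [le_div_iff₀ h1r]; linarith
  have hgs := hg0 s hs
  set w := fun n : ℕ ↦ ((n + m).choose m : ℝ) * r ^ n * (1 + (n * (1 - r)) ^ L)
  have hterm (k : ℕ) :
      r ^ (k + 1) * ((k + 1 + m).choose (k + 1) : ℝ) * g ((k + 1 : ℕ) : ℝ) ≤
        K * g s * w (k + 1) := by
    have hgrowth := le_mul_one_add_div_pow_of_doubling hmono (fun x hx ↦ (hg0 x hx).le) hK hKL
      hdouble hs (y := (k + 1 : ℕ)) (by simp)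
    rw [show ((k + 1 : ℕ) : ℝ) / s = (k + 1 : ℕ) * (1 - r) by simp [s]] at hgrowth
    rw [Nat.choose_symm_add]
    calc _ ≤ r ^ (k + 1) * ((k + 1 + m).choose m : ℝ) *
          (K * (1 + ((k + 1 : ℕ) * (1 - r)) ^ L) * g s) := by gcongr
      _ = K * g s * w (k + 1) := by simp only [w]; push_cast; ring
  have hw := (summable_choose_mul_geometric_mul_one_add_pow m L hr0.le hr1).mul_left (K * g s)
  calc _ ≤ ∑' n, K * g s * w n :=
        Summable.tsum_le_tsum_of_inj Nat.succ Nat.succ_injective (fun _ _ ↦ by positivity) hterm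
          (.of_nonneg_of_le (fun k ↦ by have := hg0 (k + 1 : ℕ) (by simp); positivity) hterm
            ((summable_nat_add_iff 1).2 hw)) hw
    _ ≤ _ := by
        rw [tsum_mul_left]; gcongr
        exact tsum_choose_mul_geometric_mul_one_add_pow_le m L hr0.le hr1

end Doubling

theorem cesaro_weight_sum_estimate (D : ℝ) (m : ℕ) :
    ∃ C : ℝ, 0 < C ∧ ∀ g : ℝ → ℝ,
      (∀ x : ℝ, 1 ≤ x → 0 < g x) →
      (∀ x y : ℝ, 1 ≤ x → x ≤ y → g x ≤ g y) →
      (∀ x : ℝ, 1 ≤ x → g (2 * x) ≤ D * g x) →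
      ∀ r : ℝ, 0 < r → r < 1 →
        ∑' k : ℕ, r ^ (k + 1) * (Nat.choose (k + 1 + m) (k + 1) : ℝ) * g ((k + 1 : ℕ) : ℝ)
          ≤ C * g (1 / (1 - r)) * (1 - r) ^ (-(m : ℤ) - 1) := by
  obtain ⟨L, hL⟩ := pow_unbounded_of_one_lt (max 1 D) (one_lt_two (α := ℝ))
  refine ⟨max 1 D * (1 + (m + L)! / m !), by positivity,
    fun g hg0 hmono hdouble r hr0 hr1 ↦ ?_⟩
  have hdouble' (x : ℝ) (hx : 1 ≤ x) : g (2 * x) ≤ max 1 D * g x :=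
    (hdouble x hx).trans (by gcongr; exacts [(hg0 x hx).le, le_max_right 1 D])
  calc _ ≤ max 1 D * g (1 / (1 - r)) * ((1 + (m + L)! / m !) / (1 - r) ^ (m + 1)) :=
        tsum_geometric_mul_choose_mul_le_of_doubling m (fun x hx y _ hxy ↦ hmono x y hx hxy) hg0
          (le_max_left 1 D) hL.le hdouble' hr0 hr1
    _ = _ := by
        rw [show -(m : ℤ) - 1 = -((m + 1 : ℕ) : ℤ) by push_cast; ring, zpow_neg, zpow_natCast]
        ring
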